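/- arXiv:math/0311345 — 5 statements merged into one kernel-verified Lean document; each statement's English description precedes it below -/
import Mathlib

section
/- Let g : ℕ → ℝ be additive, i.e. g(1) = 0 and g(mn) = g(m) + g(n) whenever gcd(m,n) = 1. Then for every real x ≥ 1, Σ_{n≤x} g(n) = Σ_{p^ν ≤ x} (g(p^ν) − g(p^{ν−1}))·⌊x/p^ν⌋, where the right-hand sum is over all primes p and integers ν ≥ 1 with p^ν ≤ x. -/
/-! By additivity and telescoping, g(n) is the sum of the increments g(p^ν) − g(p^{ν−1}) over the
prime powers p^ν dividing n. Summing over n ≤ x and exchanging the sums, each increment is counted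
once per multiple of p^ν up to x, that is ⌊x/p^ν⌋ times. -/

open Finset

theorem additive_factorization {G : Type*} [AddCommMonoid G] (g : ℕ → G) (hg1 : g 1 = 0)
    (hgadd : ∀ m n : ℕ, Nat.gcd m n = 1 → g (m * n) = g m + g n) {n : ℕ} (hn : n ≠ 0) :
    g n = n.factorization.sum fun p k => g (p ^ k) :=
  Nat.multiplicative_factorization (β := Multiplicative G) (fun n => .ofAdd (g n))
    (fun m n h => congrArg _ (hgadd m n h)) (congrArg _ hg1) hn

theorem sum_Icc_sub_pred {G : Type*} [AddCommGroup G] (f : ℕ → G) (k : ℕ) :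
    ∑ ν ∈ Icc 1 k, (f ν - f (ν - 1)) = f k - f 0 := by
  induction k with
  | zero => simp
  | succ k ih => rw [sum_Icc_succ_top (by omega), ih, Nat.add_sub_cancel]; abel

theorem sum_Icc_ite_pow_dvd_sub {G : Type*} [AddCommGroup G] (f : ℕ → G) {p n N : ℕ}
    (hp : p.Prime) (hn : n ≠ 0) (hN : n.factorization p ≤ N) :
    ∑ ν ∈ Icc 1 N, (if p ^ ν ∣ n then f ν - f (ν - 1) else 0) = f (n.factorization p) - f 0 := by
  have : {ν ∈ Icc 1 N | p ^ ν ∣ n} = Icc 1 (n.factorization p) := by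
    ext ν
    simp only [mem_filter, mem_Icc, hp.pow_dvd_iff_le_factorization hn]
    omega
  rw [← sum_filter, this, sum_Icc_sub_pred]

theorem additive_eq_sum_primes_sum_ite_pow_dvd {G : Type*} [AddCommGroup G] (g : ℕ → G)
    (hg1 : g 1 = 0) (hgadd : ∀ m n : ℕ, Nat.gcd m n = 1 → g (m * n) = g m + g n)
    {n N : ℕ} (hn : n ≠ 0) (hnN : n ≤ N) :
    ∑ p ∈ {p ∈ range (N + 1) | p.Prime}, ∑ ν ∈ Icc 1 N,
      (if p ^ ν ∣ n then g (p ^ ν) - g (p ^ (ν - 1)) else 0) = g n := by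
  have hsupp : n.factorization.support ⊆ {p ∈ range (N + 1) | p.Prime} := fun p hp => by
    rw [Nat.support_factorization] at hp
    simp only [mem_filter, mem_range]
    exact ⟨by linarith [Nat.le_of_mem_primeFactors hp], Nat.prime_of_mem_primeFactors hp⟩
  rw [additive_factorization g hg1 hgadd hn,
    Finsupp.sum_of_support_subset _ hsupp _ fun _ _ => by rw [pow_zero, hg1]]
  refine sum_congr rfl fun p hp => ?_
  have hvN : n.factorization p ≤ N := (Nat.factorization_lt p hn).le.trans hnN
  rw [sum_Icc_ite_pow_dvd_sub (fun ν => g (p ^ ν)) (mem_filter.mp hp).2 hn hvN, pow_zero, hg1,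
    sub_zero]

theorem sum_Icc_ite_dvd {M : Type*} [AddCommMonoid M] (N d : ℕ) (c : M) :
    ∑ n ∈ Icc 1 N, (if d ∣ n then c else 0) = (N / d) • c := by
  rw [← sum_filter, sum_const, ← Nat.Ioc_filter_dvd_card_eq_div]
  rfl

theorem ite_le_mul_floor_div_eq_nsmul {K : Type*} [Field K] [LinearOrder K] [IsOrderedRing K]
    [FloorRing K] (x c : K) (d : ℕ) :
    (if (d : K) ≤ x then c * (⌊x / d⌋ : K) else 0) = (⌊x⌋₊ / d) • c := by
  split_ifs with h
  · have hx : 0 ≤ x := d.cast_nonneg.trans h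
    rw [← Int.natCast_floor_eq_floor (div_nonneg hx d.cast_nonneg), Nat.floor_div_natCast,
      nsmul_eq_mul, mul_comm]
    norm_cast
  · obtain rfl | hd := eq_or_ne d 0
    · simp
    · rw [Nat.div_eq_of_lt ((Nat.floor_lt' hd).2 (not_le.mp h)), zero_smul]

theorem statement4_general
    (g : ℕ → ℝ) (hg1 : g 1 = 0)
    (hgadd : ∀ m n : ℕ, Nat.gcd m n = 1 → g (m * n) = g m + g n)
    (x : ℝ) :
    ∑ n ∈ Finset.Icc 1 ⌊x⌋₊, g n =
      ∑ p ∈ (Finset.range (⌊x⌋₊ + 1)).filter Nat.Prime,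
        ∑ ν ∈ Finset.Icc 1 ⌊x⌋₊,
          if ((p : ℝ) ^ ν ≤ x) then
            (g (p ^ ν) - g (p ^ (ν - 1))) * (⌊x / (p : ℝ) ^ ν⌋ : ℝ)
          else 0 := by
  calc ∑ n ∈ Icc 1 ⌊x⌋₊, g n
      = ∑ n ∈ Icc 1 ⌊x⌋₊, ∑ p ∈ {p ∈ range (⌊x⌋₊ + 1) | p.Prime}, ∑ ν ∈ Icc 1 ⌊x⌋₊,
          (if p ^ ν ∣ n then g (p ^ ν) - g (p ^ (ν - 1)) else 0) :=
        sum_congr rfl fun n hn => (additive_eq_sum_primes_sum_ite_pow_dvd g hg1 hgadd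
          (Nat.one_le_iff_ne_zero.mp (mem_Icc.mp hn).1) (mem_Icc.mp hn).2).symm
    _ = ∑ p ∈ {p ∈ range (⌊x⌋₊ + 1) | p.Prime}, ∑ ν ∈ Icc 1 ⌊x⌋₊, ∑ n ∈ Icc 1 ⌊x⌋₊,
          (if p ^ ν ∣ n then g (p ^ ν) - g (p ^ (ν - 1)) else 0) := by
        rw [sum_comm]
        exact sum_congr rfl fun _ _ => sum_comm
    _ = _ := by simp only [sum_Icc_ite_dvd, ← Nat.cast_pow, ite_le_mul_floor_div_eq_nsmul]

/-- For any additive `g : ℕ → ℝ` and real `x ≥ 1`,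
`∑_{n≤x} g(n) = ∑_{p^ν ≤ x} (g(p^ν) − g(p^{ν−1}))·⌊x/p^ν⌋`, the sum running over
all primes `p` and integers `ν ≥ 1` with `p^ν ≤ x`. -/
theorem statement4
    (g : ℕ → ℝ) (hg1 : g 1 = 0)
    (hgadd : ∀ m n : ℕ, Nat.gcd m n = 1 → g (m * n) = g m + g n)
    (x : ℝ) (hx : 1 ≤ x) :
    ∑ n ∈ Finset.Icc 1 ⌊x⌋₊, g n =
      ∑ p ∈ (Finset.range (⌊x⌋₊ + 1)).filter Nat.Prime,
        ∑ ν ∈ Finset.Icc 1 ⌊x⌋₊,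
          if ((p : ℝ) ^ ν ≤ x) then
            (g (p ^ ν) - g (p ^ (ν - 1))) * (⌊x / (p : ℝ) ^ ν⌋ : ℝ)
          else 0 :=
  statement4_general g hg1 hgadd x
end

section
/- Let L be slowly varying, let ρ ∈ ℝ, and put h(p) = p^ρ L(p). Define f(n) = Σ_{p|n} h(p) (sum over distinct prime divisors p of n) and F(n) = Σ_{p^α||n} α·h(p) (where p^α||n means p^α | n but p^{α+1} ∤ n). Then for every ε > 0, Σ_{n≤x} (F(n) − f(n)) = O_ε( max(x, x^{(ρ+1)/2 + ε}) ) as x → ∞. -/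
open Filter Finset

/-!
Writing `ν = νₚ(n)`, the summand is `F(n) - f(n) = ∑_{p ∣ n} (ν - 1) h(p)`, so the sum over
`n ≤ x` equals `∑_p h(p) Kₚ(x)` with `Kₚ(x) = ∑_{n ≤ x} (νₚ(n) - 1)⁺ = ∑_{α ≥ 2} ⌊x / p^α⌋`.
Hence `Kₚ(x) ≤ 2x / p²`, and `Kₚ(x) = 0` unless `p ≤ √x`. A slowly varying function
satisfies the Potter-type bound `L(y) = O(y^ε)`, so `|h(p)| ≤ C p^{ρ+ε}`, and the sum is at most
`2Cx ∑_{p ≤ √x} p^{ρ+ε-2}`. Splitting `p^{ρ+ε-2} = p^{-1-ε} p^{ρ+2ε-1}` and bounding the second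
factor by `1` or by `(√x)^{ρ+2ε-1}` according to the sign of `ρ + 2ε - 1` gives the claim,
since `∑ p^{-1-ε}` converges.
-/

theorem le_mul_div_rpow_of_doubling {g : ℝ → ℝ} {X M ε : ℝ} (hX : 0 < X) (hM : 0 ≤ M)
    (hε : 0 ≤ ε) (hbase : ∀ y ∈ Set.Icc X (2 * X), g y ≤ M)
    (hdouble : ∀ y, X ≤ y → g (2 * y) ≤ 2 ^ ε * g y) {y : ℝ} (hy : X ≤ y) :
    g y ≤ M * (y / X) ^ ε := by
  have hbase' : ∀ y ∈ Set.Icc X (2 * X), g y ≤ M * (y / X) ^ ε := fun y hy =>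
    (hbase y hy).trans <| le_mul_of_one_le_right hM <|
      Real.one_le_rpow ((one_le_div hX).2 hy.1) hε
  suffices ∀ k : ℕ, ∀ y, X ≤ y → y ≤ 2 ^ k * X → g y ≤ M * (y / X) ^ ε by
    obtain ⟨k, hk⟩ := pow_unbounded_of_one_lt (y / X) one_lt_two
    exact this k y hy ((div_lt_iff₀ hX).1 hk).le
  intro k
  induction k with
  | zero => exact fun y h₁ h₂ => hbase' y ⟨h₁, by linarith⟩
  | succ k ih =>
    intro y h₁ h₂
    rcases le_or_gt y (2 * X) with hy₂ | hy₂
    · exact hbase' y ⟨h₁, hy₂⟩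
    have hhalf := ih (y / 2) (by linarith) (by rw [pow_succ] at h₂; linarith)
    calc g y = g (2 * (y / 2)) := by ring_nf
      _ ≤ 2 ^ ε * g (y / 2) := hdouble _ (by linarith)
      _ ≤ 2 ^ ε * (M * (y / 2 / X) ^ ε) := by gcongr
      _ = M * (y / X) ^ ε := by
        rw [div_div, mul_comm 2 X, ← div_div,
          Real.div_rpow (div_nonneg (hX.le.trans h₁) hX.le) zero_le_two]
        field_simp

theorem isBigO_rpow_of_tendsto_two_mul_div {x₀ : ℝ} {L : ℝ → ℝ}
    (hLpos : ∀ x, x₀ ≤ x → 0 < L x) (hLcont : ContinuousOn L (Set.Ici x₀))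
    (hLslow : Tendsto (fun x => L (2 * x) / L x) atTop (nhds 1)) {ε : ℝ} (hε : 0 < ε) :
    L =O[atTop] fun y => y ^ ε := by
  obtain ⟨X₁, hX₁⟩ := eventually_atTop.1 <|
    hLslow.eventually_lt_const (Real.one_lt_rpow one_lt_two hε)
  set X := max X₁ (max x₀ 1)
  have hXx₀ : x₀ ≤ X := (le_max_left _ _).trans (le_max_right _ _)
  have hX : 0 < X := one_pos.trans_le ((le_max_right _ _).trans (le_max_right _ _))
  obtain ⟨M, hM⟩ := isCompact_Icc.exists_bound_of_continuousOn
    (hLcont.mono fun y (hy : y ∈ Set.Icc X (2 * X)) => hXx₀.trans hy.1)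
  have hdouble : ∀ y, X ≤ y → L (2 * y) ≤ 2 ^ ε * L y := fun y hy =>
    ((div_lt_iff₀ (hLpos y (hXx₀.trans hy))).1 (hX₁ y ((le_max_left _ _).trans hy))).le
  have hbound : ∀ y ∈ Set.Icc X (2 * X), L y ≤ M := fun y hy => (le_abs_self _).trans (hM y hy)
  have hM₀ : 0 ≤ M := (norm_nonneg _).trans (hM X ⟨le_rfl, by linarith⟩)
  refine Asymptotics.IsBigO.of_bound (M / X ^ ε) ?_
  filter_upwards [eventually_ge_atTop X] with y hy
  have hy₀ : 0 < y := hX.trans_le hy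
  rw [Real.norm_of_nonneg (hLpos y (hXx₀.trans hy)).le,
    Real.norm_of_nonneg (Real.rpow_nonneg hy₀.le ε)]
  calc L y ≤ M * (y / X) ^ ε := le_mul_div_rpow_of_doubling hX hM₀ hε.le hbound hdouble hy
    _ = M / X ^ ε * y ^ ε := by rw [Real.div_rpow hy₀.le hX.le]; ring

theorem exists_abs_natCast_rpow_mul_le {x₀ : ℝ} {L : ℝ → ℝ}
    (hLpos : ∀ x, x₀ ≤ x → 0 < L x) (hLcont : ContinuousOn L (Set.Ici x₀))
    (hLslow : Tendsto (fun x => L (2 * x) / L x) atTop (nhds 1)) (ρ : ℝ) {ε : ℝ} (hε : 0 < ε) :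
    ∃ C, 0 < C ∧ ∀ n : ℕ, n ≠ 0 → |(n : ℝ) ^ ρ * L n| ≤ C * (n : ℝ) ^ (ρ + ε) := by
  have hbigO : (fun y : ℝ => y ^ ρ * L y) =O[atTop] fun y => y ^ (ρ + ε) := by
    refine ((Asymptotics.isBigO_refl (fun y : ℝ => y ^ ρ) atTop).mul
      (isBigO_rpow_of_tendsto_two_mul_div hLpos hLcont hLslow hε)).congr'
        (EventuallyEq.refl _ _) ?_
    filter_upwards [eventually_gt_atTop 0] with y hy
    rw [Real.rpow_add hy]
  obtain ⟨C, hC, hbound⟩ := Asymptotics.bound_of_isBigO_nat_atTop hbigO.natCast_atTop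
  refine ⟨C, hC, fun n hn => ?_⟩
  have hpos : 0 < (n : ℝ) ^ (ρ + ε) := by positivity
  simpa only [Real.norm_eq_abs, abs_of_pos hpos] using hbound hpos.ne'

theorem factorization_sub_one_le_card_pow_dvd {n p N : ℕ} (hp : p.Prime) (hn : n ≠ 0)
    (hnN : n ≤ N) : n.factorization p - 1 ≤ #{α ∈ Icc 2 N | p ^ α ∣ n} := by
  calc n.factorization p - 1 = #(Icc 2 (n.factorization p)) := by simp only [Nat.card_Icc]; omega
    _ ≤ #{α ∈ Icc 2 N | p ^ α ∣ n} := card_le_card fun α hα => mem_filter.2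
      ⟨Icc_subset_Icc_right ((Nat.factorization_lt p hn).le.trans hnN) hα,
        (hp.pow_dvd_iff_le_factorization hn).2 (mem_Icc.1 hα).2⟩

theorem sum_factorization_sub_one_le {p : ℕ} (hp : p.Prime) (N : ℕ) :
    ∑ n ∈ Icc 1 N, ((n.factorization p - 1 : ℕ) : ℝ) ≤ 2 * N / (p : ℝ) ^ 2 := by
  have hcount : ∑ n ∈ Icc 1 N, (n.factorization p - 1) ≤ ∑ α ∈ Icc 2 N, N / p ^ α :=
    calc ∑ n ∈ Icc 1 N, (n.factorization p - 1)
        ≤ ∑ n ∈ Icc 1 N, #{α ∈ Icc 2 N | p ^ α ∣ n} := sum_le_sum fun n hn =>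
          factorization_sub_one_le_card_pow_dvd hp
            (Nat.one_le_iff_ne_zero.1 (mem_Icc.1 hn).1) (mem_Icc.1 hn).2
      _ = ∑ α ∈ Icc 2 N, #{n ∈ Ioc 0 N | p ^ α ∣ n} := by
          simp only [card_filter, ← Finset.Icc_add_one_left_eq_Ioc]; exact sum_comm
      _ = ∑ α ∈ Icc 2 N, N / p ^ α := by simp only [Nat.Ioc_filter_dvd_card_eq_div]
  have hp₂ : (2 : ℝ) ≤ p := by exact_mod_cast hp.two_le
  have hr₁ : (p : ℝ)⁻¹ < 1 := inv_lt_one_of_one_lt₀ (by linarith)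
  calc ∑ n ∈ Icc 1 N, ((n.factorization p - 1 : ℕ) : ℝ)
      ≤ ∑ α ∈ Icc 2 N, ((N / p ^ α : ℕ) : ℝ) := by
        rw [← Nat.cast_sum, ← Nat.cast_sum]; exact_mod_cast hcount
    _ ≤ ∑ α ∈ Ico 2 (N + 1), N * (p : ℝ)⁻¹ ^ α := by
        rw [Finset.Ico_add_one_right_eq_Icc]
        gcongr with α
        exact Nat.cast_div_le.trans_eq (by push_cast; ring)
    _ = N * ∑ α ∈ Ico 2 (N + 1), (p : ℝ)⁻¹ ^ α := by rw [mul_sum]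
    _ ≤ N * ((p : ℝ)⁻¹ ^ 2 / (1 - (p : ℝ)⁻¹)) := by
        gcongr; exact geom_sum_Ico_le_of_lt_one (by positivity) hr₁
    _ ≤ 2 * N / (p : ℝ) ^ 2 := by
        rw [show 2 * (N : ℝ) / (p : ℝ) ^ 2 = N * (2 / (p : ℝ) ^ 2) by ring]
        refine mul_le_mul_of_nonneg_left ?_ N.cast_nonneg
        rw [div_le_div_iff₀ (sub_pos.2 hr₁) (by positivity)]
        field_simp
        nlinarith

theorem factorization_le_one_of_lt_sq {n p : ℕ} (hp : p.Prime) (hn : n < p ^ 2) :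
    n.factorization p ≤ 1 := by
  by_contra! h
  have hn₀ : n ≠ 0 := by rintro rfl; simp at h
  exact hn.not_ge (Nat.le_of_dvd (Nat.pos_of_ne_zero hn₀)
    ((hp.pow_dvd_iff_le_factorization hn₀).2 h))

theorem mul_rpow_le_rpow_mul_max {m x : ℝ} (hm : 1 ≤ m) (hmx : m ^ 2 ≤ x) (ρ ε : ℝ) :
    x * m ^ (ρ + ε - 2) ≤ m ^ (-1 - ε) * max x (x ^ ((ρ + 1) / 2 + ε)) := by
  have hm₀ : 0 < m := one_pos.trans_le hm
  have hx₀ : 0 < x := by nlinarith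
  rw [show ρ + ε - 2 = (-1 - ε) + (ρ + 2 * ε - 1) by ring, Real.rpow_add hm₀, mul_left_comm]
  gcongr
  rcases le_or_gt (ρ + 2 * ε - 1) 0 with hexp | hexp
  · exact (mul_le_of_le_one_right hx₀.le (Real.rpow_le_one_of_one_le_of_nonpos hm hexp)).trans
      (le_max_left _ _)
  · have hm_sqrt : m ≤ √x := (Real.le_sqrt' hm₀).2 hmx
    calc x * m ^ (ρ + 2 * ε - 1) ≤ x * √x ^ (ρ + 2 * ε - 1) := by gcongr
      _ = x ^ ((ρ + 1) / 2 + ε) := by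
        rw [Real.sqrt_eq_rpow, ← Real.rpow_mul hx₀.le, ← Real.rpow_one_add' hx₀.le (by linarith)]
        ring_nf
      _ ≤ max x (x ^ ((ρ + 1) / 2 + ε)) := le_max_right _ _

theorem sum_factorization_sub_one_mul_rpow_le {p : ℕ} (hp : p.Prime) {x : ℝ} (hx : 0 ≤ x)
    (ρ ε : ℝ) :
    (∑ n ∈ Icc 1 ⌊x⌋₊, ((n.factorization p - 1 : ℕ) : ℝ)) * (p : ℝ) ^ (ρ + ε) ≤
      2 * ((p : ℝ) ^ (-1 - ε) * max x (x ^ ((ρ + 1) / 2 + ε))) := by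
  rcases le_or_gt (p ^ 2) ⌊x⌋₊ with hpx | hpx
  · have hp₀ : (0 : ℝ) < p := by exact_mod_cast hp.pos
    have hp_sq : (p : ℝ) ^ 2 ≤ x := by exact_mod_cast (Nat.le_floor_iff hx).1 hpx
    calc (∑ n ∈ Icc 1 ⌊x⌋₊, ((n.factorization p - 1 : ℕ) : ℝ)) * (p : ℝ) ^ (ρ + ε)
        ≤ 2 * ⌊x⌋₊ / (p : ℝ) ^ 2 * (p : ℝ) ^ (ρ + ε) := by
          gcongr; exact sum_factorization_sub_one_le hp _
      _ = 2 * (⌊x⌋₊ * (p : ℝ) ^ (ρ + ε - 2)) := by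
          rw [Real.rpow_sub hp₀, Real.rpow_two]; ring
      _ ≤ 2 * (x * (p : ℝ) ^ (ρ + ε - 2)) := by gcongr; exact Nat.floor_le hx
      _ ≤ 2 * ((p : ℝ) ^ (-1 - ε) * max x (x ^ ((ρ + 1) / 2 + ε))) := by
          gcongr 2 * ?_; exact mul_rpow_le_rpow_mul_max (by exact_mod_cast hp.one_le) hp_sq ρ ε
  · have hzero : ∀ n ∈ Icc 1 ⌊x⌋₊, n.factorization p - 1 = 0 := fun n hn =>
      Nat.sub_eq_zero_of_le (factorization_le_one_of_lt_sq hp ((mem_Icc.1 hn).2.trans_lt hpx))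
    rw [sum_eq_zero fun n hn => by rw [hzero n hn, Nat.cast_zero], zero_mul]
    have := hx.trans (le_max_left x (x ^ ((ρ + 1) / 2 + ε)))
    positivity

theorem sum_sum_primeFactors_sub_eq (h : ℕ → ℝ) (N : ℕ) :
    ∑ n ∈ Icc 1 N, (∑ p ∈ n.primeFactors, (n.factorization p : ℝ) * h p -
        ∑ p ∈ n.primeFactors, h p) =
      ∑ p ∈ (N + 1).primesBelow, (∑ n ∈ Icc 1 N, ((n.factorization p - 1 : ℕ) : ℝ)) * h p := by
  have hterm : ∀ n ∈ Icc 1 N, ∑ p ∈ n.primeFactors, (n.factorization p : ℝ) * h p -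
      ∑ p ∈ n.primeFactors, h p =
        ∑ p ∈ (N + 1).primesBelow, ((n.factorization p - 1 : ℕ) : ℝ) * h p := by
    intro n hn
    rw [← sum_sub_distrib]
    refine sum_subset_zero_on_sdiff (fun p hp => ?_) (fun p hp => ?_) (fun p hp => ?_)
    · exact Nat.mem_primesBelow.2 ⟨Nat.lt_succ_of_le ((Nat.le_of_mem_primeFactors hp).trans
        (mem_Icc.1 hn).2), Nat.prime_of_mem_primeFactors hp⟩
    · rw [Finsupp.notMem_support_iff.1 (by simpa using (mem_sdiff.1 hp).2)]
      simp
    · have hν : 1 ≤ n.factorization p := by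
        simpa [Nat.one_le_iff_ne_zero] using Finsupp.mem_support_iff.1 (by simpa using hp)
      rw [Nat.cast_sub hν]
      ring
  rw [sum_congr rfl hterm, sum_comm]
  simp only [sum_mul]

theorem abs_sum_primesBelow_le_of_abs_le_rpow {h : ℕ → ℝ} {C ρ ε x : ℝ} (hC : 0 ≤ C)
    (hε : 0 < ε) (hh : ∀ p : ℕ, p.Prime → |h p| ≤ C * (p : ℝ) ^ (ρ + ε)) (hx : 0 ≤ x) :
    |∑ p ∈ (⌊x⌋₊ + 1).primesBelow, (∑ n ∈ Icc 1 ⌊x⌋₊, ((n.factorization p - 1 : ℕ) : ℝ)) * h p| ≤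
      2 * C * (∑' m : ℕ, (m : ℝ) ^ (-1 - ε)) * max x (x ^ ((ρ + 1) / 2 + ε)) := by
  set B := max x (x ^ ((ρ + 1) / 2 + ε))
  set K : ℕ → ℝ := fun p => ∑ n ∈ Icc 1 ⌊x⌋₊, ((n.factorization p - 1 : ℕ) : ℝ)
  have hK : ∀ p, 0 ≤ K p := fun p => sum_nonneg fun n _ => Nat.cast_nonneg _
  have hB : 0 ≤ B := hx.trans (le_max_left _ _)
  have hZ : Summable fun m : ℕ => (m : ℝ) ^ (-1 - ε) := Real.summable_nat_rpow.2 (by linarith)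
  calc |∑ p ∈ (⌊x⌋₊ + 1).primesBelow, K p * h p|
      ≤ ∑ p ∈ (⌊x⌋₊ + 1).primesBelow, K p * |h p| := by
        refine (abs_sum_le_sum_abs _ _).trans_eq (sum_congr rfl fun p _ => ?_)
        rw [abs_mul, abs_of_nonneg (hK p)]
    _ ≤ ∑ p ∈ (⌊x⌋₊ + 1).primesBelow, C * (2 * ((p : ℝ) ^ (-1 - ε) * B)) := by
        refine sum_le_sum fun p hp => ?_
        have hp := (Nat.mem_primesBelow.1 hp).2
        calc K p * |h p| ≤ K p * (C * (p : ℝ) ^ (ρ + ε)) :=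
              mul_le_mul_of_nonneg_left (hh p hp) (hK p)
          _ = C * (K p * (p : ℝ) ^ (ρ + ε)) := by ring
          _ ≤ C * (2 * ((p : ℝ) ^ (-1 - ε) * B)) := by
              gcongr C * ?_; exact sum_factorization_sub_one_mul_rpow_le hp hx ρ ε
    _ = 2 * C * B * ∑ p ∈ (⌊x⌋₊ + 1).primesBelow, (p : ℝ) ^ (-1 - ε) := by
        rw [mul_sum]; exact sum_congr rfl fun p _ => by ring
    _ ≤ 2 * C * B * ∑' m : ℕ, (m : ℝ) ^ (-1 - ε) := by
        gcongr
        exact hZ.sum_le_tsum _ fun m _ => Real.rpow_nonneg m.cast_nonneg _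
    _ = 2 * C * (∑' m : ℕ, (m : ℝ) ^ (-1 - ε)) * B := by ring

theorem statement5_general
    (x₀ : ℝ) (L : ℝ → ℝ)
    (hLpos : ∀ x, x₀ ≤ x → 0 < L x)
    (hLcont : ContinuousOn L (Set.Ici x₀))
    (hLslow : ∀ c : ℝ, 0 < c →
      Tendsto (fun x : ℝ => L (c * x) / L x) atTop (nhds 1))
    (ρ : ℝ) (ε : ℝ) (hε : 0 < ε) :
    (fun x : ℝ => ∑ n ∈ Finset.Icc 1 ⌊x⌋₊,
        ((∑ p ∈ n.primeFactors, (n.factorization p : ℝ) * ((p : ℝ) ^ ρ * L p)) -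
          ∑ p ∈ n.primeFactors, (p : ℝ) ^ ρ * L p)) =O[atTop]
      (fun x : ℝ => max x (x ^ ((ρ + 1) / 2 + ε))) := by
  obtain ⟨C, hC, hh⟩ := exists_abs_natCast_rpow_mul_le hLpos hLcont (hLslow 2 two_pos) ρ hε
  refine Asymptotics.IsBigO.of_bound (2 * C * ∑' m : ℕ, (m : ℝ) ^ (-1 - ε)) ?_
  filter_upwards [eventually_ge_atTop 0] with x hx
  rw [sum_sum_primeFactors_sub_eq, Real.norm_eq_abs,
    Real.norm_of_nonneg (hx.trans (le_max_left _ _))]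
  exact abs_sum_primesBelow_le_of_abs_le_rpow hC.le hε (fun p hp => hh p hp.ne_zero) hx

/-- For `L` slowly varying, `ρ ∈ ℝ`, `h(p) = p^ρ L(p)`,
`f(n) = ∑_{p|n} h(p)` and `F(n) = ∑_{p^α||n} α·h(p)`, one has, for every `ε > 0`,
`∑_{n≤x} (F(n) − f(n)) = O_ε(max(x, x^{(ρ+1)/2+ε}))` as `x → ∞`. -/
theorem statement5
    (x₀ : ℝ) (hx₀ : 0 < x₀) (L : ℝ → ℝ)
    (hLpos : ∀ x, x₀ ≤ x → 0 < L x)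
    (hLcont : ContinuousOn L (Set.Ici x₀))
    (hLslow : ∀ c : ℝ, 0 < c →
      Tendsto (fun x : ℝ => L (c * x) / L x) atTop (nhds 1))
    (ρ : ℝ) (ε : ℝ) (hε : 0 < ε) :
    (fun x : ℝ => ∑ n ∈ Finset.Icc 1 ⌊x⌋₊,
        ((∑ p ∈ n.primeFactors, (n.factorization p : ℝ) * ((p : ℝ) ^ ρ * L p)) -
          ∑ p ∈ n.primeFactors, (p : ℝ) ^ ρ * L p)) =O[atTop]
      (fun x : ℝ => max x (x ^ ((ρ + 1) / 2 + ε))) :=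
  statement5_general x₀ L hLpos hLcont hLslow ρ ε hε
end

section
/- Let α < 0. Then the series c_α := Σ_p (log p)^α/p over all primes p converges, and as x → ∞, Σ_{n≤x} Σ_{p|n} (log p)^α = c_α·x + O( x·(log x)^α ), where the inner sum is over the distinct prime divisors p of n. -/
/-!
Swapping the sums, `∑_{n ≤ x} ∑_{p ∣ n} (log p)^α = ∑_{p ≤ x} (log p)^α ⌊x/p⌋`. Replacing `⌊x/p⌋`
by `x/p` costs at most `∑_{p ≤ x} (log p)^α`, which is `O(x (log x)^α)` after splitting the primes
at `√x`. What is left is `x ∑_{p ≤ x} (log p)^α / p = c_α x - x ∑_{p > x} (log p)^α / p`. By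
Chebyshev's bound `θ(y) ≤ y log 4`, the primes of a dyadic block `(2^k, 2^(k+1)]` contribute
`O(k^(α-1))` to the series, so it converges and its tail beyond `x` is `O((log x)^α)`.
-/

open Filter Finset Asymptotics

theorem sum_Icc_sum_primeFactors {M : Type*} [AddCommMonoid M] (f : ℕ → M) (N : ℕ) :
    ∑ n ∈ Icc 1 N, ∑ p ∈ n.primeFactors, f p = ∑ p ∈ N.primesLE, (N / p) • f p := by
  rw [sum_comm' (t' := N.primesLE) (s' := fun p => {n ∈ Ioc 0 N | p ∣ n})]
  · simp_rw [sum_const, Nat.Ioc_filter_dvd_card_eq_div]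
  · intro n p
    simp only [mem_Icc, mem_filter, mem_Ioc, Nat.mem_primeFactors, Nat.mem_primesLE]
    constructor
    · rintro ⟨⟨hn, hnN⟩, hp, hpn, -⟩
      exact ⟨⟨⟨hn, hnN⟩, hpn⟩, (Nat.le_of_dvd hn hpn).trans hnN, hp⟩
    · rintro ⟨⟨⟨hn, hnN⟩, hpn⟩, -, hp⟩
      exact ⟨⟨hn, hnN⟩, hp, hpn, by omega⟩

theorem abs_floor_div_sub_div_le_one {x : ℝ} (hx : 0 ≤ x) (p : ℕ) :
    |((⌊x⌋₊ / p : ℕ) : ℝ) - x / p| ≤ 1 := by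
  rw [← Nat.floor_div_natCast, abs_le]
  have hxp : 0 ≤ x / p := by positivity
  constructor
  · linarith [Nat.lt_floor_add_one (x / p)]
  · linarith [Nat.floor_le hxp]

theorem abs_sum_mul_floor_div_sub_div_le {x : ℝ} (hx : 0 ≤ x) (s : Finset ℕ) {f : ℕ → ℝ}
    (hf : ∀ p ∈ s, 0 ≤ f p) :
    |∑ p ∈ s, f p * (((⌊x⌋₊ / p : ℕ) : ℝ) - x / p)| ≤ ∑ p ∈ s, f p := by
  refine (abs_sum_le_sum_abs _ _).trans (sum_le_sum fun p hp => ?_)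
  rw [abs_mul, abs_of_nonneg (hf p hp)]
  exact mul_le_of_le_one_right (hf p hp) (abs_floor_div_sub_div_le_one hx p)

theorem Nat.Prime.log_rpow_nonneg {p : ℕ} (hp : p.Prime) (α : ℝ) : 0 ≤ Real.log p ^ α :=
  Real.rpow_nonneg (Real.log_nonneg (by exact_mod_cast hp.one_lt.le)) α

theorem natCast_card_le_of_forall_mem {s : Finset ℕ} {y : ℝ} (hy : 0 ≤ y)
    (h : ∀ n ∈ s, 0 < n ∧ (n : ℝ) ≤ y) : (#s : ℝ) ≤ y := by
  have hsub : s ⊆ Icc 1 ⌊y⌋₊ := fun n hn =>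
    mem_Icc.mpr ⟨(h n hn).1, Nat.le_floor (h n hn).2⟩
  calc (#s : ℝ) ≤ #(Icc 1 ⌊y⌋₊) := by exact_mod_cast card_le_card hsub
    _ = ⌊y⌋₊ := by simp
    _ ≤ y := Nat.floor_le hy

theorem sum_primesLE_log_rpow_le {α : ℝ} (hα : α ≤ 0) {x : ℝ} (hx : 1 < x) :
    ∑ p ∈ ⌊x⌋₊.primesLE, Real.log p ^ α
      ≤ Real.log 2 ^ α * √x + 2 ^ (-α) * (x * Real.log x ^ α) := by
  have hx0 : 0 < x := by linarith
  have hlogx : 0 < Real.log x := Real.log_pos hx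
  have hprime : ∀ p ∈ ⌊x⌋₊.primesLE, p.Prime ∧ (p : ℝ) ≤ x := fun p hp =>
    ⟨(Nat.mem_primesLE.mp hp).2, (Nat.le_floor_iff hx0.le).mp (Nat.mem_primesLE.mp hp).1⟩
  rw [← sum_filter_add_sum_filter_not _ (fun p : ℕ => (p : ℝ) ≤ √x)]
  gcongr ?_ + ?_
  · calc _ ≤ #{p ∈ ⌊x⌋₊.primesLE | ((p : ℕ) : ℝ) ≤ √x} • Real.log 2 ^ α := by
          refine sum_le_card_nsmul _ _ _ fun p hp => ?_
          have hp2 : (2 : ℝ) ≤ p := by exact_mod_cast (hprime p (mem_filter.mp hp).1).1.two_le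
          exact Real.rpow_le_rpow_of_nonpos (Real.log_pos one_lt_two)
            (Real.log_le_log two_pos hp2) hα
      _ ≤ Real.log 2 ^ α * √x := by
          rw [nsmul_eq_mul, mul_comm]
          gcongr
          refine natCast_card_le_of_forall_mem (Real.sqrt_nonneg x) fun p hp => ?_
          rw [mem_filter] at hp
          exact ⟨(hprime p hp.1).1.pos, hp.2⟩
  · calc _ ≤ #{p ∈ ⌊x⌋₊.primesLE | ¬((p : ℕ) : ℝ) ≤ √x} • (Real.log x / 2) ^ α := by
          refine sum_le_card_nsmul _ _ _ fun p hp => ?_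
          rw [mem_filter, not_le] at hp
          refine Real.rpow_le_rpow_of_nonpos (by positivity) ?_ hα
          rw [← Real.log_sqrt hx0.le]
          exact Real.log_le_log (Real.sqrt_pos.mpr hx0) hp.2.le
      _ ≤ (Real.log x / 2) ^ α * x := by
          rw [nsmul_eq_mul, mul_comm]
          gcongr
          refine natCast_card_le_of_forall_mem hx0.le fun p hp => ?_
          exact ⟨(hprime p (mem_filter.mp hp).1).1.pos, (hprime p (mem_filter.mp hp).1).2⟩
      _ = 2 ^ (-α) * (x * Real.log x ^ α) := by
          rw [Real.div_rpow hlogx.le zero_le_two, Real.rpow_neg zero_le_two]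
          ring

theorem sqrt_isBigO_mul_log_rpow (α : ℝ) :
    (fun x : ℝ => √x) =O[atTop] fun x => x * Real.log x ^ α := by
  have hlo := (isLittleO_log_rpow_rpow_atTop (-α) one_half_pos).bound one_pos
  refine IsBigO.of_bound' ?_
  filter_upwards [hlo, eventually_gt_atTop 1] with x hle hx
  have hx0 : 0 < x := by linarith
  have hlogx : 0 < Real.log x := Real.log_pos hx
  rw [one_mul, Real.norm_of_nonneg (by positivity), Real.norm_of_nonneg (by positivity),
    ← Real.sqrt_eq_rpow, Real.rpow_neg hlogx.le] at hle
  rw [Real.norm_of_nonneg (Real.sqrt_nonneg x), Real.norm_of_nonneg (by positivity)]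
  calc √x = x / √x := by rw [Real.div_sqrt]
    _ ≤ x / (Real.log x ^ α)⁻¹ := by gcongr
    _ = x * Real.log x ^ α := by rw [div_inv_eq_mul]

theorem sum_primesLE_log_rpow_isBigO {α : ℝ} (hα : α ≤ 0) :
    (fun x : ℝ => ∑ p ∈ ⌊x⌋₊.primesLE, Real.log p ^ α) =O[atTop]
      fun x => x * Real.log x ^ α := by
  have hbound : (fun x : ℝ => ∑ p ∈ ⌊x⌋₊.primesLE, Real.log p ^ α) =O[atTop]
      fun x => Real.log 2 ^ α * √x + 2 ^ (-α) * (x * Real.log x ^ α) := by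
    refine IsBigO.of_bound' ?_
    filter_upwards [eventually_gt_atTop 1] with x hx
    rw [Real.norm_of_nonneg (sum_nonneg fun p hp => (Nat.mem_primesLE.mp hp).2.log_rpow_nonneg α)]
    exact (sum_primesLE_log_rpow_le hα hx).trans (Real.le_norm_self _)
  exact hbound.trans <|
    ((sqrt_isBigO_mul_log_rpow α).const_mul_left _).add ((isBigO_refl _ _).const_mul_left _)

noncomputable def primeTerm (α : ℝ) (n : ℕ) : ℝ := if n.Prime then Real.log n ^ α / n else 0

theorem primeTerm_nonneg (α : ℝ) (n : ℕ) : 0 ≤ primeTerm α n := by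
  unfold primeTerm
  split_ifs with hn
  · exact div_nonneg (hn.log_rpow_nonneg α) n.cast_nonneg
  · rfl

theorem sum_Ioc_ite_prime_log_le (m N : ℕ) :
    ∑ n ∈ Ioc m N, (if n.Prime then Real.log n else 0) ≤ Real.log 4 * N := by
  calc ∑ n ∈ Ioc m N, (if n.Prime then Real.log n else 0)
      ≤ ∑ n ∈ Ioc 0 N, (if n.Prime then Real.log n else 0) := by
        refine sum_le_sum_of_subset_of_nonneg (Ioc_subset_Ioc_left m.zero_le) fun n _ _ => ?_
        split_ifs with hn
        · exact Real.log_nonneg (by exact_mod_cast hn.one_lt.le)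
        · rfl
    _ = Chebyshev.theta N := by rw [Chebyshev.theta, Nat.floor_natCast, sum_filter]
    _ ≤ Real.log 4 * N := Chebyshev.theta_le_log4_mul_x N.cast_nonneg

theorem sum_Ioc_two_mul_primeTerm_le {α : ℝ} (hα : α ≤ 1) {m : ℕ} (hm : 1 < m) :
    ∑ n ∈ Ioc m (2 * m), primeTerm α n ≤ 2 * Real.log 4 * Real.log m ^ (α - 1) := by
  have hm0 : (0 : ℝ) < m := by positivity
  have hlogm : 0 < Real.log m := Real.log_pos (by exact_mod_cast hm)
  -- `(log p)^α / p = log p * (log p)^(α - 1) / p`, and the `log p` are summed by Chebyshev's bound.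
  have hterm : ∀ n ∈ Ioc m (2 * m),
      primeTerm α n ≤ Real.log m ^ (α - 1) / m * (if n.Prime then Real.log n else 0) := by
    intro n hn
    have hmn : (m : ℝ) ≤ n := by exact_mod_cast (mem_Ioc.mp hn).1.le
    unfold primeTerm
    split_ifs with hp
    · have hlogmn : Real.log m ≤ Real.log n := Real.log_le_log hm0 hmn
      have hlogn : 0 < Real.log n := hlogm.trans_le hlogmn
      rw [← sub_add_cancel α 1, Real.rpow_add_one hlogn.ne', add_sub_cancel_right,
        div_mul_eq_mul_div]
      gcongr ?_ * _ / ?_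
      exact Real.rpow_le_rpow_of_nonpos hlogm hlogmn (by linarith)
    · simp
  calc ∑ n ∈ Ioc m (2 * m), primeTerm α n
      ≤ ∑ n ∈ Ioc m (2 * m), Real.log m ^ (α - 1) / m * (if n.Prime then Real.log n else 0) :=
        sum_le_sum hterm
    _ = Real.log m ^ (α - 1) / m * ∑ n ∈ Ioc m (2 * m), (if n.Prime then Real.log n else 0) := by
        rw [mul_sum]
    _ ≤ Real.log m ^ (α - 1) / m * (Real.log 4 * (2 * m : ℕ)) := by
        gcongr
        exact sum_Ioc_ite_prime_log_le m (2 * m)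
    _ = 2 * Real.log 4 * Real.log m ^ (α - 1) := by push_cast; field_simp

theorem sum_Ioc_eq_sum_Ico_sum_Ioc {M : Type*} [AddCommMonoid M] (f : ℕ → M) {a : ℕ → ℕ}
    (ha : Monotone a) {K L : ℕ} (hKL : K ≤ L) :
    ∑ n ∈ Ioc (a K) (a L), f n = ∑ k ∈ Ico K L, ∑ n ∈ Ioc (a k) (a (k + 1)), f n := by
  induction L, hKL using Nat.le_induction with
  | base => simp
  | succ L hKL ih =>
    rw [sum_Ico_succ_top hKL, ← ih, sum_Ioc_consecutive _ (ha hKL) (ha L.le_succ)]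

theorem sum_Ico_rpow_succ_le {r : ℝ} (hr : r < 0) {K : ℕ} (hK : 0 < K) (L : ℕ) :
    ∑ k ∈ Ico K L, ((k : ℝ) + 1) ^ (r - 1) ≤ K ^ r / (-r) := by
  have hK0 : (0 : ℝ) < K := by exact_mod_cast hK
  rcases le_or_gt K L with hKL | hLK
  · have hanti : AntitoneOn (fun x : ℝ => x ^ (r - 1)) (Set.Icc K L) := fun x hx y _ hxy =>
      Real.rpow_le_rpow_of_nonpos (hK0.trans_le hx.1) hxy (by linarith)
    have hint := hanti.sum_le_integral_Ico hKL
    rw [integral_rpow (Or.inr ⟨by linarith, fun h0 => ?_⟩), sub_add_cancel] at hint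
    · push_cast at hint
      calc _ ≤ _ := hint
        _ = K ^ r / (-r) - (L : ℝ) ^ r / (-r) := by ring
        _ ≤ K ^ r / (-r) := sub_le_self _ (div_nonneg (by positivity) (by linarith))
    · rw [Set.uIcc_of_le (by exact_mod_cast hKL)] at h0
      exact h0.1.not_gt hK0
  · rw [Ico_eq_empty_of_le hLK.le, sum_empty]
    exact div_nonneg (by positivity) (by linarith)

theorem exists_sum_Ioc_primeTerm_le {α : ℝ} (hα : α < 0) :
    ∃ C, ∀ K N N' : ℕ, 0 < K → 2 ^ (K + 1) ≤ N →
      ∑ n ∈ Ioc N N', primeTerm α n ≤ C * (K : ℝ) ^ α := by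
  refine ⟨2 * Real.log 4 * Real.log 2 ^ (α - 1) / (-α), fun K N N' hK hN => ?_⟩
  have ha : Monotone fun k => 2 ^ (k + 1) := fun i j hij => Nat.pow_le_pow_right two_pos (by omega)
  have hblock : ∀ k : ℕ, ∑ n ∈ Ioc (2 ^ (k + 1)) (2 ^ (k + 1 + 1)), primeTerm α n
      ≤ 2 * Real.log 4 * Real.log 2 ^ (α - 1) * ((k : ℝ) + 1) ^ (α - 1) := by
    intro k
    rw [pow_succ' 2 (k + 1)]
    refine (sum_Ioc_two_mul_primeTerm_le (by linarith)
      (Nat.one_lt_two_pow k.succ_ne_zero)).trans_eq ?_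
    rw [Nat.cast_pow, Real.log_pow, Nat.cast_ofNat, Nat.cast_succ,
      Real.mul_rpow (by positivity) (Real.log_nonneg one_le_two)]
    ring
  calc ∑ n ∈ Ioc N N', primeTerm α n
      ≤ ∑ n ∈ Ioc (2 ^ (K + 1)) (2 ^ (K + N' + 1)), primeTerm α n := by
        refine sum_le_sum_of_subset_of_nonneg (Ioc_subset_Ioc hN ?_)
          fun n _ _ => primeTerm_nonneg α n
        have := N'.lt_two_pow_self
        have := Nat.pow_le_pow_right two_pos (show N' ≤ K + N' + 1 by omega)
        omega
    _ = ∑ k ∈ Ico K (K + N'), ∑ n ∈ Ioc (2 ^ (k + 1)) (2 ^ (k + 1 + 1)), primeTerm α n :=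
        sum_Ioc_eq_sum_Ico_sum_Ioc _ ha (K.le_add_right N')
    _ ≤ ∑ k ∈ Ico K (K + N'), 2 * Real.log 4 * Real.log 2 ^ (α - 1) * ((k : ℝ) + 1) ^ (α - 1) :=
        sum_le_sum fun k _ => hblock k
    _ = 2 * Real.log 4 * Real.log 2 ^ (α - 1) * ∑ k ∈ Ico K (K + N'), ((k : ℝ) + 1) ^ (α - 1) := by
        rw [mul_sum]
    _ ≤ 2 * Real.log 4 * Real.log 2 ^ (α - 1) * ((K : ℝ) ^ α / (-α)) := by
        gcongr
        exact sum_Ico_rpow_succ_le hα hK _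
    _ = _ := by ring

theorem sum_range_add_eq_sum_Ioc {M : Type*} [AddCommMonoid M] (f : ℕ → M) (N m : ℕ) :
    ∑ i ∈ range m, f (i + (N + 1)) = ∑ n ∈ Ioc N (N + m), f n := by
  rw [range_eq_Ico, sum_Ico_add', ← Ico_succ_succ_eq_Ioc, Order.succ_eq_add_one,
    Order.succ_eq_add_one, zero_add, add_comm m, add_right_comm]

theorem summable_primeTerm {α : ℝ} (hα : α < 0) : Summable (primeTerm α) := by
  obtain ⟨C, hC⟩ := exists_sum_Ioc_primeTerm_le hα
  rw [← summable_nat_add_iff (4 + 1)]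
  refine summable_of_sum_range_le (c := C * (1 : ℕ) ^ α) (fun i => primeTerm_nonneg α _)
    fun m => ?_
  rw [sum_range_add_eq_sum_Ioc]
  exact hC 1 4 _ one_pos le_rfl

theorem exists_two_pow_succ_le_floor {x : ℝ} (hx : 4 ≤ x) :
    ∃ K : ℕ, 0 < K ∧ 2 ^ (K + 1) ≤ ⌊x⌋₊ ∧ Real.log x ≤ 3 * Real.log 2 * K := by
  set N := ⌊x⌋₊
  have hN : 2 ^ 2 ≤ N := Nat.le_floor (by norm_num; exact hx)
  have hlogN : 2 ≤ Nat.log 2 N := Nat.le_log_of_pow_le one_lt_two hN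
  refine ⟨Nat.log 2 N - 1, by omega, ?_, ?_⟩
  · rw [Nat.sub_add_cancel (by omega)]
    exact Nat.pow_log_le_self 2 (by omega)
  · set K := Nat.log 2 N - 1
    have hK : (1 : ℝ) ≤ K := by exact_mod_cast (show 1 ≤ K by omega)
    have hNK : N + 1 ≤ 2 ^ (K + 2) := by
      have := Nat.lt_pow_succ_log_self one_lt_two N
      rwa [show K + 2 = (Nat.log 2 N).succ by omega]
    have hxK : x ≤ 2 ^ (K + 2) := (Nat.lt_floor_add_one x).le.trans (by exact_mod_cast hNK)
    calc Real.log x ≤ Real.log (2 ^ (K + 2)) := Real.log_le_log (by linarith) hxK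
      _ = (K + 2) * Real.log 2 := by rw [Real.log_pow]; push_cast; ring
      _ ≤ 3 * Real.log 2 * K := by nlinarith [Real.log_pos one_lt_two]

theorem tsum_primeTerm_nat_add_isBigO {α : ℝ} (hα : α < 0) :
    (fun x : ℝ => ∑' i, primeTerm α (i + (⌊x⌋₊ + 1))) =O[atTop] fun x => Real.log x ^ α := by
  obtain ⟨C, hC⟩ := exists_sum_Ioc_primeTerm_le hα
  have hC0 : 0 ≤ C := by simpa using hC 1 4 4 one_pos le_rfl
  refine IsBigO.of_bound (C * (3 * Real.log 2) ^ (-α)) ?_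
  filter_upwards [eventually_ge_atTop 4] with x hx
  obtain ⟨K, hK, hKN, hlogx_le⟩ := exists_two_pow_succ_le_floor hx
  have hlogx : 0 < Real.log x := Real.log_pos (by linarith)
  have htail : ∑' i, primeTerm α (i + (⌊x⌋₊ + 1)) ≤ C * (K : ℝ) ^ α :=
    Real.tsum_le_of_sum_range_le (fun i => primeTerm_nonneg α _) fun m => by
      rw [sum_range_add_eq_sum_Ioc]
      exact hC K _ _ hK hKN
  rw [Real.norm_of_nonneg (tsum_nonneg fun i => primeTerm_nonneg α _),
    Real.norm_of_nonneg (Real.rpow_nonneg hlogx.le α)]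
  calc _ ≤ C * (K : ℝ) ^ α := htail
    _ ≤ C * (Real.log x / (3 * Real.log 2)) ^ α := by
        gcongr ?_ * ?_
        refine Real.rpow_le_rpow_of_nonpos (by positivity) ?_ hα.le
        rw [div_le_iff₀' (by positivity [Real.log_pos one_lt_two])]
        exact hlogx_le
    _ = C * (3 * Real.log 2) ^ (-α) * Real.log x ^ α := by
        have hlog2 : 0 < Real.log 2 := Real.log_pos one_lt_two
        rw [Real.div_rpow hlogx.le (by positivity), Real.rpow_neg (by positivity)]
        ring

theorem sum_sum_primeFactors_sub_mul_eq {α : ℝ} (hs : Summable (primeTerm α)) (x : ℝ) :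
    (∑ n ∈ Icc 1 ⌊x⌋₊, ∑ p ∈ n.primeFactors, Real.log p ^ α) - (∑' n, primeTerm α n) * x
      = ∑ p ∈ ⌊x⌋₊.primesLE, Real.log p ^ α * (((⌊x⌋₊ / p : ℕ) : ℝ) - x / p)
        - x * ∑' i, primeTerm α (i + (⌊x⌋₊ + 1)) := by
  have hhead : ∑ n ∈ range (⌊x⌋₊ + 1), primeTerm α n
      = ∑ p ∈ ⌊x⌋₊.primesLE, Real.log p ^ α / p := by
    rw [Nat.primesLE, Nat.primesBelow, sum_filter]
    rfl
  rw [sum_Icc_sum_primeFactors, ← hs.sum_add_tsum_nat_add (⌊x⌋₊ + 1), hhead, add_mul, sum_mul,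
    ← sub_sub, ← sum_sub_distrib, mul_comm x]
  congr 1
  exact sum_congr rfl fun p _ => by rw [nsmul_eq_mul]; ring

/-- For `α < 0`, the series `c_α = ∑_p (log p)^α/p` converges, and
`∑_{n≤x} ∑_{p|n} (log p)^α = c_α·x + O(x·(log x)^α)` as `x → ∞`. -/
theorem statement10 (α : ℝ) (hα : α < 0) :
    Summable (fun p : Nat.Primes => Real.log p ^ α / (p : ℝ)) ∧
    ((fun x : ℝ =>
        (∑ n ∈ Finset.Icc 1 ⌊x⌋₊,
            ∑ p ∈ n.primeFactors, Real.log p ^ α) -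
          (∑' p : Nat.Primes, Real.log p ^ α / (p : ℝ)) * x) =O[atTop]
      (fun x : ℝ => x * Real.log x ^ α)) := by
  have hs := summable_primeTerm hα
  refine ⟨(Nat.Primes.summable_iff_summable_ite _).mpr hs, ?_⟩
  have hc : ∑' p : Nat.Primes, Real.log p ^ α / (p : ℝ) = ∑' n, primeTerm α n :=
    Nat.Primes.tsum_eq_tsum_ite fun n : ℕ => Real.log n ^ α / n
  have hfloor : (fun x : ℝ => ∑ p ∈ ⌊x⌋₊.primesLE, Real.log p ^ α *
      (((⌊x⌋₊ / p : ℕ) : ℝ) - x / p)) =O[atTop] fun x => x * Real.log x ^ α := by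
    refine (IsBigO.of_bound' ?_).trans (sum_primesLE_log_rpow_isBigO hα.le)
    filter_upwards [eventually_ge_atTop 0] with x hx
    exact (abs_sum_mul_floor_div_sub_div_le hx _ fun p hp =>
      (Nat.mem_primesLE.mp hp).2.log_rpow_nonneg α).trans (Real.le_norm_self _)
  rw [hc]
  exact (hfloor.sub ((isBigO_refl _ _).mul (tsum_primeTerm_nat_add_isBigO hα))).congr_left
    fun x => (sum_sum_primeFactors_sub_mul_eq hs x).symm
end

section
/- Let L be slowly varying, let ρ > 0, and let h : [2,∞) → (0,∞) be non-decreasing. If Σ_{n≤x} Σ_{p^ν||n} ν·h(p) = (ζ(ρ+1)/(ρ+1) + o(1)) · x^{ρ+1} L(x)/log x as x → ∞, then h(x) = O(x^ρ L(x)). -/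
/-!
Primes in `(y, 16y]` each occur as an `n ≤ 16y` with weight `h(p) ≥ h(y)`, and by Chebyshev's
bounds there are at least `y / log y` of them. Hence `h(y) · y / log y` is at most the summatory
function at `16y`, which by hypothesis is `O(y^{ρ+1} L(16y) / log y)`; slow variation turns
`L(16y)` into `O(L(y))`.
-/

open Filter Finset Real Chebyshev Asymptotics
open scoped Nat.Prime

/-- The factor `16` leaves room in Chebyshev's bounds `π(x) ≥ x log 2 / log x` and
`π(x) ≤ (log 4 + 1) x / log x`: `16 log 2 / 2 - (log 4 + 1) > 1` once `log (16x) ≤ 2 log x`. -/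
lemma eventually_div_log_le_primeCounting_sub :
    ∀ᶠ x : ℝ in atTop, x / log x ≤ (π ⌊16 * x⌋₊ : ℝ) - π ⌊x⌋₊ := by
  have hlog_small : ∀ᶠ x : ℝ in atTop, log (16 * x + 2) ≤ x + 1 / 8 := by
    have hshift : Tendsto (fun x : ℝ => 16 * x + 2) atTop atTop :=
      tendsto_atTop_add_const_right _ _ (tendsto_id.const_mul_atTop (by norm_num))
    filter_upwards [hshift.eventually (isLittleO_log_id_atTop.bound (c := 1 / 16) (by norm_num)),
      eventually_ge_atTop 0] with x hx hx0
    rw [norm_eq_abs, norm_eq_abs, id, abs_of_nonneg (by positivity : (0:ℝ) ≤ 16 * x + 2)] at hx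
    linarith [le_abs_self (log (16 * x + 2))]
  filter_upwards [eventually_primeCounting_le one_pos, hlog_small, eventually_ge_atTop 16]
    with x hupper hlog hx
  have hlogx : 0 < log x := log_pos (by linarith)
  have hlog16 : log (16 * x) ≤ 2 * log x := by
    rw [log_mul (by norm_num) (by linarith)]
    linarith [log_le_log (by norm_num) hx]
  have hlower := pi_ge' (x := 16 * x) (by linarith)
  rw [div_le_iff₀ (log_pos (by linarith))] at hlower
  rw [le_div_iff₀ hlogx] at hupper
  have hlog4 : log 4 = 2 * log 2 := by
    rw [show (4:ℝ) = 2 ^ 2 by norm_num, log_pow]; norm_num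
  have hlog2 := log_two_gt_d9
  have hπ : (0:ℝ) ≤ π ⌊16 * x⌋₊ := Nat.cast_nonneg _
  rw [div_le_iff₀ hlogx]
  nlinarith [mul_le_mul_of_nonneg_left hlog16 hπ]

def factorizationWeight (h : ℝ → ℝ) (n : ℕ) : ℝ :=
  ∑ p ∈ n.primeFactors, (n.factorization p : ℝ) * h p

section

variable {h : ℝ → ℝ}

lemma factorizationWeight_prime {p : ℕ} (hp : p.Prime) : factorizationWeight h p = h p := by
  simp [factorizationWeight, hp.primeFactors, hp.factorization_self]

lemma factorizationWeight_nonneg (hpos : ∀ p : ℕ, p.Prime → 0 ≤ h p) (n : ℕ) :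
    0 ≤ factorizationWeight h n :=
  sum_nonneg fun p hp => mul_nonneg (Nat.cast_nonneg _) (hpos p (Nat.prime_of_mem_primeFactors hp))

lemma sum_primesLE_le_sum_factorizationWeight (hpos : ∀ p : ℕ, p.Prime → 0 ≤ h p) (N : ℕ) :
    ∑ p ∈ Nat.primesLE N, h p ≤ ∑ n ∈ Icc 1 N, factorizationWeight h n := by
  calc ∑ p ∈ Nat.primesLE N, h p
      = ∑ p ∈ Nat.primesLE N, factorizationWeight h p :=
        sum_congr rfl fun p hp => (factorizationWeight_prime (Nat.prime_of_mem_primesLE hp)).symm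
    _ ≤ ∑ n ∈ Icc 1 N, factorizationWeight h n := by
        refine sum_le_sum_of_subset_of_nonneg (fun p hp => ?_)
          fun n _ _ => factorizationWeight_nonneg hpos n
        simp only [Nat.mem_primesLE] at hp
        exact mem_Icc.2 ⟨hp.2.one_le, hp.1⟩

lemma mul_primeCounting_sub_le_sum_factorizationWeight (hpos : ∀ p : ℕ, p.Prime → 0 ≤ h p)
    (hmono : ∀ x y : ℝ, 2 ≤ x → x ≤ y → h x ≤ h y) {x y : ℝ} (hx : 2 ≤ x) (hxy : x ≤ y) :
    h x * ((π ⌊y⌋₊ : ℝ) - π ⌊x⌋₊) ≤ ∑ n ∈ Icc 1 ⌊y⌋₊, factorizationWeight h n := by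
  have hsub : Nat.primesLE ⌊x⌋₊ ⊆ Nat.primesLE ⌊y⌋₊ := Nat.primesLE_mono (Nat.floor_mono hxy)
  calc h x * ((π ⌊y⌋₊ : ℝ) - π ⌊x⌋₊)
      = ∑ _p ∈ Nat.primesLE ⌊y⌋₊ \ Nat.primesLE ⌊x⌋₊, h x := by
        rw [sum_const, card_sdiff_of_subset hsub, nsmul_eq_mul,
          Nat.cast_sub (card_le_card hsub), Nat.primesLE_card_eq_primeCounting,
          Nat.primesLE_card_eq_primeCounting, mul_comm]
    _ ≤ ∑ p ∈ Nat.primesLE ⌊y⌋₊ \ Nat.primesLE ⌊x⌋₊, h p := by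
        refine sum_le_sum fun p hp => hmono _ _ hx ?_
        simp only [Finset.mem_sdiff, Nat.mem_primesLE, not_and] at hp
        have hxp : ⌊x⌋₊ < p := by by_contra! hle; exact hp.2 hle hp.1.2
        exact ((Nat.floor_lt (by linarith)).1 hxp).le
    _ ≤ ∑ p ∈ Nat.primesLE ⌊y⌋₊, h p :=
        sum_le_sum_of_subset_of_nonneg sdiff_subset fun p hp _ =>
          hpos p (Nat.prime_of_mem_primesLE hp)
    _ ≤ _ := sum_primesLE_le_sum_factorizationWeight hpos _

lemma eventually_mul_self_le_sum_factorizationWeight_mul_log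
    (hpos : ∀ x : ℝ, 2 ≤ x → 0 < h x) (hmono : ∀ x y : ℝ, 2 ≤ x → x ≤ y → h x ≤ h y) :
    ∀ᶠ y : ℝ in atTop,
      h y * y ≤ (∑ n ∈ Icc 1 ⌊16 * y⌋₊, factorizationWeight h n) * log (16 * y) := by
  filter_upwards [eventually_div_log_le_primeCounting_sub, eventually_ge_atTop 2]
    with y hcount hy
  have hprime_nonneg : ∀ p : ℕ, p.Prime → 0 ≤ h p :=
    fun p hp => (hpos p (by exact_mod_cast hp.two_le)).le
  have hlog : 0 < log y := log_pos (by linarith)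
  have hS : 0 ≤ ∑ n ∈ Icc 1 ⌊16 * y⌋₊, factorizationWeight h n :=
    sum_nonneg fun n _ => factorizationWeight_nonneg hprime_nonneg n
  have hprimes := mul_primeCounting_sub_le_sum_factorizationWeight hprime_nonneg hmono hy
    (show y ≤ 16 * y by linarith)
  calc h y * y = h y * (y / log y) * log y := by field_simp
    _ ≤ (∑ n ∈ Icc 1 ⌊16 * y⌋₊, factorizationWeight h n) * log y := by
        gcongr
        exact (mul_le_mul_of_nonneg_left hcount (hpos y hy).le).trans hprimes
    _ ≤ (∑ n ∈ Icc 1 ⌊16 * y⌋₊, factorizationWeight h n) * log (16 * y) := by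
        gcongr
        linarith

end

theorem statement12_general
    (x₀ : ℝ) (L : ℝ → ℝ)
    (hLpos : ∀ x, x₀ ≤ x → 0 < L x)
    (hLslow : ∀ c : ℝ, 0 < c →
      Tendsto (fun x : ℝ => L (c * x) / L x) atTop (nhds 1))
    (ρ : ℝ)
    (h : ℝ → ℝ) (hpos : ∀ x : ℝ, 2 ≤ x → 0 < h x)
    (hmono : ∀ x y : ℝ, 2 ≤ x → x ≤ y → h x ≤ h y)
    (hyp : Tendsto (fun x : ℝ =>
        (∑ n ∈ Finset.Icc 1 ⌊x⌋₊,
            ∑ p ∈ n.primeFactors, (n.factorization p : ℝ) * h p) *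
          Real.log x / (x ^ (ρ + 1) * L x))
      atTop (nhds ((riemannZeta ((ρ : ℂ) + 1)).re / (ρ + 1)))) :
    h =O[atTop] (fun x : ℝ => x ^ ρ * L x) := by
  set S : ℝ → ℝ := fun x => ∑ n ∈ Icc 1 ⌊x⌋₊, factorizationWeight h n
  have hLne : ∀ᶠ x in atTop, L x ≠ 0 :=
    (eventually_ge_atTop x₀).mono fun x hx => (hLpos x hx).ne'
  have hdenom : ∀ᶠ x in atTop, x ^ (ρ + 1) * L x ≠ 0 := by
    filter_upwards [hLne, eventually_gt_atTop 0] with x hL hx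
    exact mul_ne_zero (rpow_pos_of_pos hx _).ne' hL
  have hS : (fun x => S x * log x) =O[atTop] fun x => x ^ (ρ + 1) * L x :=
    isBigO_of_div_tendsto_nhds (hdenom.mono fun x hx h0 => absurd h0 hx) _ hyp
  have hL : (fun x => L (16 * x)) =O[atTop] L :=
    isBigO_of_div_tendsto_nhds (hLne.mono fun x hx h0 => absurd h0 hx) 1 (hLslow 16 (by norm_num))
  have h16 : Tendsto (fun y : ℝ => 16 * y) atTop atTop := tendsto_id.const_mul_atTop (by norm_num)
  calc h =O[atTop] fun y => S (16 * y) * log (16 * y) * y⁻¹ := by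
        refine IsBigO.of_bound' ?_
        filter_upwards [eventually_mul_self_le_sum_factorizationWeight_mul_log hpos hmono,
          eventually_ge_atTop 2] with y hy hy2
        rw [norm_of_nonneg (hpos y hy2).le, ← div_eq_mul_inv]
        exact ((le_div_iff₀ (by linarith)).2 hy).trans (le_norm_self _)
    _ =O[atTop] fun y => (16 * y) ^ (ρ + 1) * L (16 * y) * y⁻¹ :=
        (hS.comp_tendsto h16).mul (isBigO_refl _ _)
    _ =ᶠ[atTop] fun y => 16 ^ (ρ + 1) * (y ^ ρ * L (16 * y)) := by
        filter_upwards [eventually_gt_atTop 0] with y hy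
        rw [mul_rpow (by norm_num) hy.le, rpow_add_one hy.ne']
        field_simp
    _ =O[atTop] fun y => y ^ ρ * L y := ((isBigO_refl _ _).mul hL).const_mul_left _

/-- For `L` slowly varying, `ρ > 0` and `h : [2,∞) → (0,∞)`
non-decreasing: if `∑_{n≤x} ∑_{p^ν||n} ν·h(p) = (ζ(ρ+1)/(ρ+1) + o(1))·x^{ρ+1}L(x)/log x`,
then `h(x) = O(x^ρ L(x))`. -/
theorem statement12
    (x₀ : ℝ) (hx₀ : 0 < x₀) (L : ℝ → ℝ)
    (hLpos : ∀ x, x₀ ≤ x → 0 < L x)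
    (hLcont : ContinuousOn L (Set.Ici x₀))
    (hLslow : ∀ c : ℝ, 0 < c →
      Tendsto (fun x : ℝ => L (c * x) / L x) atTop (nhds 1))
    (ρ : ℝ) (hρ : 0 < ρ)
    (h : ℝ → ℝ) (hpos : ∀ x : ℝ, 2 ≤ x → 0 < h x)
    (hmono : ∀ x y : ℝ, 2 ≤ x → x ≤ y → h x ≤ h y)
    (hyp : Tendsto (fun x : ℝ =>
        (∑ n ∈ Finset.Icc 1 ⌊x⌋₊,
            ∑ p ∈ n.primeFactors, (n.factorization p : ℝ) * h p) *
          Real.log x / (x ^ (ρ + 1) * L x))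
      atTop (nhds ((riemannZeta ((ρ : ℂ) + 1)).re / (ρ + 1)))) :
    h =O[atTop] (fun x : ℝ => x ^ ρ * L x) :=
  statement12_general x₀ L hLpos hLslow ρ h hpos hmono hyp
end

section
/- Let L be slowly varying, let ρ > 0, and let h : [2,∞) → (0,∞) be non-decreasing. If Σ_{n≤x} Σ_{p^ν||n} ν·h(p) = (ζ(ρ+1)/(ρ+1) + o(1)) · x^{ρ+1} L(x)/log x as x → ∞, then also Σ_{n≤x} Σ_{p|n} h(p) = (ζ(ρ+1)/(ρ+1) + o(1)) · x^{ρ+1} L(x)/log x as x → ∞, where the inner sum in the second expression is over the distinct prime divisors p of n. -/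
/-
Write `S(x) = ∑_{n ≤ x} ∑_{p^ν ‖ n} ν h(p)` and `T(x) = ∑_{n ≤ x} ∑_{p ∣ n} h(p)`. Summing over the
primes first, `S(x) = ∑_p h(p) v_p(N!)` and `T(x) = ∑_p h(p) ⌊N/p⌋` with `N = ⌊x⌋`, so Legendre's
formula `v_p(N!) = ⌊N/p⌋ + v_p(⌊N/p⌋!)` gives `0 ≤ S(x) - T(x) = ∑_p h(p) v_p(⌊N/p⌋!)`. Only primes
`p ≤ √N` contribute, and comparing `v_p(⌊N/p⌋!)` with `v_p(⌊√N⌋!)` yields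
`S(x) - T(x) ≤ 4 √x S(√x)`.

The hypothesis makes `S` regularly varying of index `ρ + 1 > 1`: `S(2x)/S(x) → 2^(ρ+1)`. Hence
`S(2x) ≥ 2^β S(x)` for some `β > 1` and all large `x`, and since `S` is monotone this iterates to
`S(√x) ≤ 2^β x^(-β/2) S(x)`. Thus `S - T = O(x^((1-β)/2) S) = o(S)`, so `T ~ S` and `T` inherits
the asymptotics of `S`.
-/

open Filter Finset Real Asymptotics Topology

namespace Nat

theorem factorization_factorial_eq_div_add {p : ℕ} (hp : p.Prime) (N : ℕ) :
    (N)!.factorization p = N / p + (N / p)!.factorization p := by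
  have hlog : ∀ m ≤ N, log p m < N + 1 := fun m hm =>
    ((log_mono_right hm).trans (log_le_self p N)).trans_lt N.lt_succ_self
  rw [factorization_factorial hp (lt_succ_of_lt (hlog N le_rfl)),
    factorization_factorial hp (hlog _ (div_le_self N p)), sum_eq_sum_Ico_succ_bot (by omega),
    pow_one]
  congr 1
  rw [← sum_Ico_add']
  exact sum_congr rfl fun i _ => by rw [Nat.div_div_eq_div_mul, ← pow_succ']

theorem mul_factorization_factorial_div_le {p N M : ℕ} (hp : p.Prime) (hN : N < (M + 1) ^ 2) :
    M * (N / p)!.factorization p ≤ 2 * N * (M)!.factorization p := by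
  rcases le_or_gt p M with hpM | hMp
  · set ν := (N / p)!.factorization p
    have hν : ν * p ≤ N := calc
      ν * p ≤ N / p * p := Nat.mul_le_mul_right p
        ((factorization_factorial_le_div_pred hp _).trans (Nat.div_le_self _ _))
      _ ≤ N := Nat.div_mul_le_self N p
    have hb : M / p ≤ (M)!.factorization p := by
      rw [factorization_factorial_eq_div_add hp M]; exact le_add_right _ _
    have hM : M ≤ 2 * (M / p) * p := by
      have h1 : 1 ≤ M / p := (Nat.one_le_div_iff hp.pos).mpr hpM
      have h2 := Nat.lt_mul_div_succ M hp.pos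
      nlinarith
    calc M * ν ≤ 2 * (M / p) * (ν * p) := by nlinarith
      _ ≤ 2 * (M / p) * N := Nat.mul_le_mul_left _ hν
      _ ≤ 2 * N * (M)!.factorization p := by nlinarith
  · have hNp : N / p < p := Nat.div_lt_of_lt_mul (by nlinarith)
    simp [factorization_factorial_eq_zero_of_lt hNp]

end Nat

noncomputable def bigOmegaSum (h : ℝ → ℝ) (N : ℕ) : ℝ :=
  ∑ n ∈ Icc 1 N, ∑ p ∈ n.primeFactors, (n.factorization p : ℝ) * h p

noncomputable def omegaSum (h : ℝ → ℝ) (N : ℕ) : ℝ :=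
  ∑ n ∈ Icc 1 N, ∑ p ∈ n.primeFactors, h p

section

open Nat

variable (h : ℝ → ℝ) {N K : ℕ}

theorem primeFactors_subset_primesLE {n : ℕ} (hn : n ∈ Icc 1 N) (hNK : N ≤ K) :
    n.primeFactors ⊆ K.primesLE := fun p hp => by
  rw [mem_Icc] at hn
  exact mem_primesLE.mpr
    ⟨(le_of_mem_primeFactors hp).trans (hn.2.trans hNK), prime_of_mem_primeFactors hp⟩

theorem bigOmegaSum_eq_sum_primesLE (hNK : N ≤ K) :
    bigOmegaSum h N = ∑ p ∈ K.primesLE, ((N)!.factorization p : ℝ) * h p := by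
  have hinner : ∀ n ∈ Icc 1 N, ∑ p ∈ n.primeFactors, (n.factorization p : ℝ) * h p
      = ∑ p ∈ K.primesLE, (n.factorization p : ℝ) * h p := fun n hn =>
    sum_subset (primeFactors_subset_primesLE hn hNK) fun p _ hp => by
      rw [← support_factorization, Finsupp.notMem_support_iff] at hp
      simp [hp]
  rw [bigOmegaSum, sum_congr rfl hinner, sum_comm]
  refine sum_congr rfl fun p _ => ?_
  rw [← sum_mul, ← prod_Ico_id_eq_factorial,
    factorization_prod_apply fun n hn => one_le_iff_ne_zero.mp (mem_Ico.mp hn).1,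
    Ico_add_one_right_eq_Icc, cast_sum]

theorem omegaSum_eq_sum_primesLE (hNK : N ≤ K) :
    omegaSum h N = ∑ p ∈ K.primesLE, ((N / p : ℕ) : ℝ) * h p := by
  have hinner : ∀ n ∈ Icc 1 N, ∑ p ∈ n.primeFactors, h p
      = ∑ p ∈ K.primesLE, if p ∣ n then h p else 0 := fun n hn => by
    rw [← sum_filter]
    congr 1
    ext p
    rw [mem_Icc] at hn
    simp only [mem_filter, mem_primesLE, mem_primeFactors]
    have := Nat.le_of_dvd (n := n) (m := p) (by omega)
    grind
  rw [omegaSum, sum_congr rfl hinner, sum_comm]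
  refine sum_congr rfl fun p _ => ?_
  rw [← sum_filter, sum_const, nsmul_eq_mul, ← Nat.Ioc_filter_dvd_card_eq_div,
    ← Icc_add_one_left_eq_Ioc, zero_add]

theorem bigOmegaSum_sub_omegaSum :
    bigOmegaSum h N - omegaSum h N = ∑ p ∈ N.primesLE, ((N / p)!.factorization p : ℝ) * h p := by
  rw [bigOmegaSum_eq_sum_primesLE h le_rfl, omegaSum_eq_sum_primesLE h le_rfl, ← sum_sub_distrib]
  refine sum_congr rfl fun p hp => ?_
  rw [factorization_factorial_eq_div_add (prime_of_mem_primesLE hp)]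
  push_cast
  ring

theorem omegaSum_le_bigOmegaSum (hh : ∀ p : ℕ, p.Prime → 0 ≤ h p) :
    omegaSum h N ≤ bigOmegaSum h N := by
  rw [← sub_nonneg, bigOmegaSum_sub_omegaSum]
  exact sum_nonneg fun p hp => mul_nonneg (cast_nonneg _) (hh p (prime_of_mem_primesLE hp))

theorem bigOmegaSum_mono (hh : ∀ p : ℕ, p.Prime → 0 ≤ h p) : Monotone (bigOmegaSum h) :=
  fun _ _ hMN => sum_le_sum_of_subset_of_nonneg (Icc_subset_Icc_right hMN) fun _ _ _ =>
    sum_nonneg fun p hp => mul_nonneg (cast_nonneg _) (hh p (prime_of_mem_primeFactors hp))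

theorem bigOmegaSum_nonneg (hh : ∀ p : ℕ, p.Prime → 0 ≤ h p) : 0 ≤ bigOmegaSum h N :=
  (bigOmegaSum_mono h hh (Nat.zero_le N)).trans' (by simp [bigOmegaSum])

theorem mul_bigOmegaSum_sub_omegaSum_le (hh : ∀ p : ℕ, p.Prime → 0 ≤ h p) {M : ℕ} (hMN : M ≤ N)
    (hN : N < (M + 1) ^ 2) :
    M * (bigOmegaSum h N - omegaSum h N) ≤ 2 * N * bigOmegaSum h M := by
  rw [bigOmegaSum_sub_omegaSum, bigOmegaSum_eq_sum_primesLE h hMN, mul_sum, mul_sum]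
  refine sum_le_sum fun p hp => ?_
  have hp' := prime_of_mem_primesLE hp
  have key : (M * (N / p)!.factorization p : ℝ) ≤ 2 * N * (M)!.factorization p := by
    exact_mod_cast mul_factorization_factorial_div_le hp' hN
  rw [← mul_assoc, ← mul_assoc]
  exact mul_le_mul_of_nonneg_right key (hh p hp')

theorem bigOmegaSum_sub_omegaSum_floor_le (hh : ∀ p : ℕ, p.Prime → 0 ≤ h p) {x : ℝ}
    (hx : 1 ≤ x) :
    bigOmegaSum h ⌊x⌋₊ - omegaSum h ⌊x⌋₊ ≤ 4 * √x * bigOmegaSum h ⌊√x⌋₊ := by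
  set N := ⌊x⌋₊
  set M := Nat.sqrt N
  have hN1 : 1 ≤ N := Nat.le_floor (by exact_mod_cast hx)
  have hM1 : 1 ≤ M := Nat.sqrt_pos.mpr hN1
  have hM : (0 : ℝ) < M := by exact_mod_cast hM1
  have hNx : (N : ℝ) ≤ √x * √x := by
    rw [Real.mul_self_sqrt (by linarith)]
    exact Nat.floor_le (by linarith)
  have hNM : (N : ℝ) < 4 * M * M := by
    have : N < (M + 1) ^ 2 := Nat.lt_succ_sqrt' N
    exact_mod_cast this.trans_le (by nlinarith)
  have hMx : (M : ℝ) ≤ √x := by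
    rw [Real.le_sqrt (cast_nonneg _) (by linarith)]
    exact le_trans (by exact_mod_cast Nat.sqrt_le' N) (Nat.floor_le (by linarith))
  have hN : (N : ℝ) ≤ 2 * M * √x := by nlinarith
  have key := mul_bigOmegaSum_sub_omegaSum_le h hh (Nat.sqrt_le_self N) (Nat.lt_succ_sqrt' N)
  have hmono : bigOmegaSum h M ≤ bigOmegaSum h ⌊√x⌋₊ := bigOmegaSum_mono h hh (Nat.le_floor hMx)
  have hSM := bigOmegaSum_nonneg h hh (N := M)
  refine le_of_mul_le_mul_left ?_ hM
  calc (M : ℝ) * (bigOmegaSum h N - omegaSum h N) ≤ 2 * N * bigOmegaSum h M := key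
    _ ≤ 2 * (2 * M * √x) * bigOmegaSum h ⌊√x⌋₊ := by gcongr
    _ = M * (4 * √x * bigOmegaSum h ⌊√x⌋₊) := by ring

theorem isBigO_bigOmegaSum_sub_omegaSum (hh : ∀ p : ℕ, p.Prime → 0 ≤ h p) :
    (fun x : ℝ => bigOmegaSum h ⌊x⌋₊ - omegaSum h ⌊x⌋₊) =O[atTop]
      (fun x => √x * bigOmegaSum h ⌊√x⌋₊) := by
  refine IsBigO.of_bound 4 ?_
  filter_upwards [eventually_ge_atTop 1] with x hx
  rw [norm_of_nonneg (sub_nonneg.mpr (omegaSum_le_bigOmegaSum h hh)),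
    norm_of_nonneg (mul_nonneg (sqrt_nonneg x) (bigOmegaSum_nonneg h hh))]
  linarith [bigOmegaSum_sub_omegaSum_floor_le h hh hx]

end

theorem tendsto_log_div_log_const_mul {c : ℝ} (hc : 0 < c) :
    Tendsto (fun x => log x / log (c * x)) atTop (𝓝 1) := by
  have h : Tendsto (fun x => (1 + log c / log x)⁻¹) atTop (𝓝 1) := by
    simpa using ((tendsto_const_nhds.div_atTop tendsto_log_atTop).const_add 1).inv₀ (by norm_num)
  refine h.congr' ?_
  filter_upwards [eventually_gt_atTop 1] with x hx
  have hlog : log x ≠ 0 := (log_pos hx).ne'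
  rw [log_mul hc.ne' (by linarith)]
  field_simp
  ring

theorem tendsto_rpow_mul_div_log_ratio {L : ℝ → ℝ} {c : ℝ} (hc : 0 < c)
    (hL : Tendsto (fun x => L (c * x) / L x) atTop (𝓝 1)) (r : ℝ) :
    Tendsto (fun x => ((c * x) ^ r * L (c * x) / log (c * x)) / (x ^ r * L x / log x)) atTop
      (𝓝 (c ^ r)) := by
  have h := (hL.mul (tendsto_log_div_log_const_mul hc)).const_mul (c ^ r)
  rw [mul_one, mul_one] at h
  refine h.congr' ?_
  filter_upwards [eventually_gt_atTop 0] with x hx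
  have : x ^ r ≠ 0 := (rpow_pos_of_pos hx r).ne'
  rw [mul_rpow hc.le hx.le]
  simp only [div_eq_mul_inv, mul_inv]
  field_simp

theorem tendsto_comp_mul_div_self_of_tendsto_div {S g : ℝ → ℝ} {C c l : ℝ} (hC : C ≠ 0)
    (hc : 0 < c)
    (hS : Tendsto (fun x => S x / g x) atTop (𝓝 C))
    (hg : Tendsto (fun x => g (c * x) / g x) atTop (𝓝 l)) :
    Tendsto (fun x => S (c * x) / S x) atTop (𝓝 l) := by
  have hSc := hS.comp (tendsto_id.const_mul_atTop hc)
  have h := (hSc.div hS hC).mul hg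
  rw [div_self hC, one_mul] at h
  refine h.congr' ?_
  filter_upwards [hS.eventually_ne hC, hSc.eventually_ne hC] with x hx hcx
  simp only [Function.comp_apply, id, ne_eq, div_eq_zero_iff, not_or, Pi.div_apply] at hx hcx ⊢
  field_simp [hx.1, hx.2, hcx.1, hcx.2]

theorem div_rpow_le_two_rpow_mul_div_rpow {S : ℝ → ℝ} (hS : Monotone S) {β x₁ : ℝ} (hx₁ : 0 < x₁)
    (hβ : 0 ≤ β) (hdouble : ∀ x, x₁ ≤ x → 2 ^ β * S x ≤ S (2 * x)) {x y : ℝ} (hy : x₁ ≤ y)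
    (hyx : y ≤ x) (hSx : 0 ≤ S x) :
    S y / y ^ β ≤ 2 ^ β * (S x / x ^ β) := by
  have hy0 : 0 < y := hx₁.trans_le hy
  have hstep : ∀ z, x₁ ≤ z → S z / z ^ β ≤ S (2 * z) / (2 * z) ^ β := fun z hz => by
    rw [mul_rpow zero_le_two (hx₁.le.trans hz), ← div_div]
    exact div_le_div_of_nonneg_right ((le_div_iff₀' (by positivity)).mpr (hdouble z hz))
      (rpow_nonneg (hx₁.le.trans hz) β)
  have hiter : ∀ n : ℕ, S y / y ^ β ≤ S (2 ^ n * y) / (2 ^ n * y) ^ β := by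
    intro n
    induction n with
    | zero => simp
    | succ n ih =>
      rw [pow_succ', mul_assoc]
      exact ih.trans (hstep _ (hy.trans (le_mul_of_one_le_left hy0.le (one_le_pow₀ one_le_two))))
  obtain ⟨n, hn, hn'⟩ := exists_nat_pow_near ((one_le_div hy0).mpr hyx) one_lt_two
  rw [le_div_iff₀ hy0] at hn
  rw [div_lt_iff₀ hy0, pow_succ, mul_assoc] at hn'
  calc S y / y ^ β ≤ S (2 ^ n * y) / (2 ^ n * y) ^ β := hiter n
    _ ≤ S x / (x / 2) ^ β :=
      div_le_div₀ hSx (hS hn) (rpow_pos_of_pos (by linarith) β)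
        (rpow_le_rpow (by linarith) (by linarith) hβ)
    _ = 2 ^ β * (S x / x ^ β) := by
      rw [div_rpow (by linarith) zero_le_two]
      field_simp

theorem isEquivalent_of_sub_isBigO_sqrt_mul {S T : ℝ → ℝ} (hS : Monotone S)
    (hS0 : ∀ x, 0 ≤ S x)
    {r : ℝ} (hr : 1 < r) (hdouble : Tendsto (fun x => S (2 * x) / S x) atTop (𝓝 (2 ^ r)))
    (hST : (fun x => S x - T x) =O[atTop] (fun x => √x * S √x)) :
    T ~[atTop] S := by
  obtain ⟨β, hβ1, hβr⟩ := exists_between hr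
  obtain ⟨x₁, hx₁⟩ := eventually_atTop.mp
    (hdouble.eventually_const_lt (rpow_lt_rpow_of_exponent_lt one_lt_two hβr))
  have hdoubling : ∀ x, max x₁ 1 ≤ x → 2 ^ β * S x ≤ S (2 * x) := fun x hx => by
    have hlt := hx₁ x (le_of_max_le_left hx)
    have hSx : 0 < S x := (hS0 x).lt_of_ne' fun h0 => by
      rw [h0, div_zero] at hlt
      linarith [rpow_pos_of_pos two_pos β]
    exact ((lt_div_iff₀ hSx).mp hlt).le
  have hsqrt : (fun x => √x * S √x) =O[atTop] (fun x => √x ^ (1 - β) * S x) := by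
    refine IsBigO.of_bound (2 ^ β) ?_
    filter_upwards [eventually_ge_atTop (max x₁ 1 ^ 2), eventually_ge_atTop 1] with x hxsq hx1
    have hs0 : 0 < √x := sqrt_pos.mpr (by linarith)
    have hsx : max x₁ 1 ≤ √x := (le_sqrt (by positivity) (by linarith)).mpr hxsq
    have hs : √x ≤ x := (sqrt_le_left (by linarith)).mpr (by nlinarith)
    have key := div_rpow_le_two_rpow_mul_div_rpow hS (by positivity) (by linarith) hdoubling hsx hs
      (hS0 x)
    have hxβ : x ^ β = √x ^ β * √x ^ β := by
      rw [← mul_rpow hs0.le hs0.le, mul_self_sqrt (by linarith)]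
    have hsβ : 0 < √x ^ β := rpow_pos_of_pos hs0 β
    rw [hxβ, div_le_iff₀ hsβ] at key
    rw [norm_of_nonneg (mul_nonneg hs0.le (hS0 _)),
      norm_of_nonneg (mul_nonneg (rpow_nonneg hs0.le _) (hS0 _)), rpow_sub hs0, rpow_one]
    calc √x * S √x ≤ √x * (2 ^ β * (S x / (√x ^ β * √x ^ β)) * √x ^ β) := by gcongr
      _ = 2 ^ β * (√x / √x ^ β * S x) := by field_simp
  have hsmall : (fun x => √x ^ (1 - β) * S x) =o[atTop] S := by
    have h : Tendsto (fun x => √x ^ (1 - β)) atTop (𝓝 0) := by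
      rw [show 1 - β = -(β - 1) by ring]
      exact (tendsto_rpow_neg_atTop (by linarith)).comp tendsto_sqrt_atTop
    simpa using ((isLittleO_one_iff ℝ).mpr h).mul_isBigO (isBigO_refl S atTop)
  simpa [IsEquivalent, Pi.sub_def, neg_sub] using
    ((hST.trans hsqrt).trans_isLittleO hsmall).neg_left

theorem statement13_general
    (L : ℝ → ℝ)
    (hLslow : ∀ c : ℝ, 0 < c →
      Tendsto (fun x : ℝ => L (c * x) / L x) atTop (nhds 1))
    (ρ : ℝ) (hρ : 0 < ρ)
    (h : ℝ → ℝ) (hpos : ∀ x : ℝ, 2 ≤ x → 0 < h x)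
    (hyp : Tendsto (fun x : ℝ =>
        (∑ n ∈ Finset.Icc 1 ⌊x⌋₊,
            ∑ p ∈ n.primeFactors, (n.factorization p : ℝ) * h p) *
          Real.log x / (x ^ (ρ + 1) * L x))
      atTop (nhds ((riemannZeta ((ρ : ℂ) + 1)).re / (ρ + 1)))) :
    Tendsto (fun x : ℝ =>
        (∑ n ∈ Finset.Icc 1 ⌊x⌋₊, ∑ p ∈ n.primeFactors, h p) *
          Real.log x / (x ^ (ρ + 1) * L x))
      atTop (nhds ((riemannZeta ((ρ : ℂ) + 1)).re / (ρ + 1))) := by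
  have hh : ∀ p : ℕ, p.Prime → 0 ≤ h p := fun p hp => (hpos p (by exact_mod_cast hp.two_le)).le
  have hC : (riemannZeta ((ρ : ℂ) + 1)).re / (ρ + 1) ≠ 0 := by
    have hζ := riemannZeta_re_pos_of_one_lt (by linarith : 1 < ρ + 1)
    push_cast at hζ
    exact (div_pos hζ (by linarith)).ne'
  have hS : Tendsto (fun x => bigOmegaSum h ⌊x⌋₊ / (x ^ (ρ + 1) * L x / log x)) atTop
      (𝓝 ((riemannZeta ((ρ : ℂ) + 1)).re / (ρ + 1))) := by
    simp only [div_div_eq_mul_div]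
    exact hyp
  have hdouble := tendsto_comp_mul_div_self_of_tendsto_div hC two_pos hS
    (tendsto_rpow_mul_div_log_ratio two_pos (hLslow 2 two_pos) (ρ + 1))
  have hTS : (fun x : ℝ => omegaSum h ⌊x⌋₊) ~[atTop] (fun x => bigOmegaSum h ⌊x⌋₊) :=
    isEquivalent_of_sub_isBigO_sqrt_mul ((bigOmegaSum_mono h hh).comp Nat.floor_mono)
      (fun _ => bigOmegaSum_nonneg h hh) (by linarith) hdouble
      (isBigO_bigOmegaSum_sub_omegaSum h hh)
  have hT := (hTS.div (IsEquivalent.refl (u := fun x => x ^ (ρ + 1) * L x / log x))).symm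
    |>.tendsto_nhds hS
  simp only [Pi.div_def, div_div_eq_mul_div] at hT
  exact hT

/-- For `L` slowly varying, `ρ > 0` and `h : [2,∞) → (0,∞)`
non-decreasing: if `∑_{n≤x} ∑_{p^ν||n} ν·h(p) = (ζ(ρ+1)/(ρ+1) + o(1))·x^{ρ+1}L(x)/log x`,
then also `∑_{n≤x} ∑_{p|n} h(p) = (ζ(ρ+1)/(ρ+1) + o(1))·x^{ρ+1}L(x)/log x`. -/
theorem statement13
    (x₀ : ℝ) (hx₀ : 0 < x₀) (L : ℝ → ℝ)
    (hLpos : ∀ x, x₀ ≤ x → 0 < L x)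
    (hLcont : ContinuousOn L (Set.Ici x₀))
    (hLslow : ∀ c : ℝ, 0 < c →
      Tendsto (fun x : ℝ => L (c * x) / L x) atTop (nhds 1))
    (ρ : ℝ) (hρ : 0 < ρ)
    (h : ℝ → ℝ) (hpos : ∀ x : ℝ, 2 ≤ x → 0 < h x)
    (hmono : ∀ x y : ℝ, 2 ≤ x → x ≤ y → h x ≤ h y)
    (hyp : Tendsto (fun x : ℝ =>
        (∑ n ∈ Finset.Icc 1 ⌊x⌋₊,
            ∑ p ∈ n.primeFactors, (n.factorization p : ℝ) * h p) *
          Real.log x / (x ^ (ρ + 1) * L x))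
      atTop (nhds ((riemannZeta ((ρ : ℂ) + 1)).re / (ρ + 1)))) :
    Tendsto (fun x : ℝ =>
        (∑ n ∈ Finset.Icc 1 ⌊x⌋₊, ∑ p ∈ n.primeFactors, h p) *
          Real.log x / (x ^ (ρ + 1) * L x))
      atTop (nhds ((riemannZeta ((ρ : ℂ) + 1)).re / (ρ + 1))) :=
  statement13_general L hLslow ρ hρ h hpos hyp
end
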